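/- arXiv:math/0703911 — 4 statements merged into one kernel-verified Lean document; each statement's English description precedes it below -/
import Mathlib

section
/- Let E = EuclideanSpace ℝ (Fin 3), let t_f > 0, and let C > 0, b > 0 be real constants. Let D : E × E → ℝ and g : E → E be continuously differentiable (C¹). Let r, v : ℝ → E and m : ℝ → ℝ be continuous on [0,t_f] with m(t) > 0 and v(t) ≠ 0 for all t ∈ [0,t_f], and let u : ℝ → E be any function. Suppose p_r, p_v : ℝ → E and p_m : ℝ → ℝ are differentiable on [0,t_f] and satisfy, for every t ∈ [0,t_f], the adjoint equations: p_r'(t) = (1/m(t))·(⟪p_v(t), v(t)⟫/‖v(t)‖)·∇_r D(r(t),v(t)) + (fderiv ℝ g (r(t)))† (p_v(t)); p_v'(t) = −p_r(t) + (1/m(t))·(⟪p_v(t), v(t)⟫/‖v(t)‖)·∇_v D(r(t),v(t)) + (D(r(t),v(t))/m(t))·p_v(t)/‖v(t)‖ − (D(r(t),v(t))/m(t))·⟪p_v(t),v(t)⟫·v(t)/‖v(t)‖³; p_m'(t) = (1/m(t))·⟪p_v(t), −(D(r(t),v(t))/m(t))·v(t)/‖v(t)‖ + (C/m(t))·u(t)⟫.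 If there exists t₀ ∈ [0,t_f] with p_r(t₀) = 0 and p_v(t₀) = 0, then p_r(t) = 0 and p_v(t) = 0 for every t ∈ [0,t_f], and p_m is constant on [0,t_f]. -/
/-!
The costate `(p_r, p_v)` solves a linear ODE whose coefficients are continuous on the compact
interval `[0, t_f]`, so `‖(p_r, p_v)'‖ ≤ K ‖(p_r, p_v)‖` for a uniform `K`. Grönwall's inequality,
run forwards and backwards from `t₀`, forces `(p_r, p_v) ≡ 0`; then the right-hand side of the
`p_m` equation vanishes, so `p_m` is constant.
-/

local notation "E3" => EuclideanSpace ℝ (Fin 3)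

open Set

theorem eqOn_zero_Icc_of_norm_deriv_le {F : Type*} [NormedAddCommGroup F] [NormedSpace ℝ F]
    {f f' : ℝ → F} {K a b t₀ : ℝ} (hf : ∀ t ∈ Icc a b, HasDerivAt f (f' t) t)
    (bound : ∀ t ∈ Icc a b, ‖f' t‖ ≤ K * ‖f t‖) (ht₀ : t₀ ∈ Icc a b) (h0 : f t₀ = 0) :
    EqOn f 0 (Icc a b) := by
  have hcont : ContinuousOn f (Icc a b) := fun t ht => (hf t ht).continuousAt.continuousWithinAt
  intro t ht
  rcases le_total t₀ t with h | h
  · have sub : Icc t₀ b ⊆ Icc a b := Icc_subset_Icc_left ht₀.1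
    exact eq_zero_of_abs_deriv_le_mul_abs_self_of_eq_zero_right (hcont.mono sub)
      (fun x hx => (hf x (sub (Ico_subset_Icc_self hx))).hasDerivWithinAt) h0
      (fun x hx => bound x (sub (Ico_subset_Icc_self hx))) t ⟨h, ht.2⟩
  · have mem : ∀ s ∈ Icc (-t₀) (-a), -s ∈ Icc a b := fun s hs =>
      ⟨le_neg_of_le_neg hs.2, (neg_le.mp hs.1).trans ht₀.2⟩
    simpa using eq_zero_of_abs_deriv_le_mul_abs_self_of_eq_zero_right (f := fun s => f (-s))
      (f' := fun s => -f' (-s)) (K := K) (hcont.comp continuousOn_neg mem)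
      (fun s hs => by
        simpa [Function.comp_def] using ((hf _ (mem s (Ico_subset_Icc_self hs))).scomp s
          (hasDerivAt_neg s)).hasDerivWithinAt)
      (by simpa using h0) (fun s hs => by simpa using bound _ (mem s (Ico_subset_Icc_self hs)))
      (-t) ⟨neg_le_neg h, neg_le_neg ht.1⟩

theorem norm_gradient_fst_le {E F : Type*} [NormedAddCommGroup E] [InnerProductSpace ℝ E]
    [CompleteSpace E] [NormedAddCommGroup F] [NormedSpace ℝ F] {D : E × F → ℝ} {a : E} {c : F}
    (hD : DifferentiableAt ℝ D (a, c)) :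
    ‖gradient (fun x => D (x, c)) a‖ ≤ ‖fderiv ℝ D (a, c)‖ := by
  rw [gradient, LinearIsometryEquiv.norm_map, HasFDerivAt.fderiv (f := fun x => D (x, c))
    (hD.hasFDerivAt.comp a (hasFDerivAt_prodMk_left a c))]
  exact (ContinuousLinearMap.opNorm_comp_le _ _).trans
    (mul_le_of_le_one_right (norm_nonneg _) (ContinuousLinearMap.norm_inl_le_one ℝ E F))

theorem norm_gradient_snd_le {E F : Type*} [NormedAddCommGroup E] [NormedSpace ℝ E]
    [NormedAddCommGroup F] [InnerProductSpace ℝ F] [CompleteSpace F] {D : E × F → ℝ} {a : E} {c : F}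
    (hD : DifferentiableAt ℝ D (a, c)) :
    ‖gradient (fun y => D (a, y)) c‖ ≤ ‖fderiv ℝ D (a, c)‖ := by
  rw [gradient, LinearIsometryEquiv.norm_map, HasFDerivAt.fderiv (f := fun y => D (a, y))
    (hD.hasFDerivAt.comp c (hasFDerivAt_prodMk_right a c))]
  exact (ContinuousLinearMap.opNorm_comp_le _ _).trans
    (mul_le_of_le_one_right (norm_nonneg _) (ContinuousLinearMap.norm_inr_le_one ℝ E F))

noncomputable section

namespace Goddard

variable {E : Type*} [NormedAddCommGroup E] [InnerProductSpace ℝ E]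

def adjointField [CompleteSpace E] (D : E × E → ℝ) (g : E → E) (m : ℝ) (r v p_r p_v : E) :
    E × E :=
  ((1 / m * (inner ℝ p_v v / ‖v‖)) • gradient (fun x => D (x, v)) r
      + (ContinuousLinearMap.adjoint (fderiv ℝ g r)) p_v,
    -p_r + (1 / m * (inner ℝ p_v v / ‖v‖)) • gradient (fun y => D (r, y)) v
      + (D (r, v) / m / ‖v‖) • p_v
      - (D (r, v) / m * inner ℝ p_v v / ‖v‖ ^ 3) • v)

def adjointFieldBound (D : E × E → ℝ) (g : E → E) (m : ℝ) (r v : E) : ℝ :=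
  1 + |m⁻¹| * ‖fderiv ℝ D (r, v)‖ + ‖fderiv ℝ g r‖ + 2 * |D (r, v) / m| * ‖v‖⁻¹

theorem norm_adjointField_le [CompleteSpace E] {D : E × E → ℝ} (g : E → E) {m : ℝ} {r v : E}
    (hD : DifferentiableAt ℝ D (r, v)) (p_r p_v : E) :
    ‖adjointField D g m r v p_r p_v‖ ≤ adjointFieldBound D g m r v * ‖(p_r, p_v)‖ := by
  set P := ‖(p_r, p_v)‖
  have hr : ‖p_r‖ ≤ P := norm_fst_le (p_r, p_v)
  have hv : ‖p_v‖ ≤ P := norm_snd_le (p_r, p_v)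
  have hP : 0 ≤ P := norm_nonneg _
  have hproj : |inner ℝ p_v v / ‖v‖| ≤ P := by
    rw [abs_div, abs_norm]
    exact div_le_of_le_mul₀ (norm_nonneg _) hP
      ((abs_real_inner_le_norm _ _).trans (mul_le_mul_of_nonneg_right hv (norm_nonneg _)))
  have hcoef : ‖1 / m * (inner ℝ p_v v / ‖v‖)‖ ≤ |m⁻¹| * P := by
    rw [Real.norm_eq_abs, one_div, abs_mul]
    exact mul_le_mul_of_nonneg_left hproj (abs_nonneg _)
  have hgrad₁ : ‖(1 / m * (inner ℝ p_v v / ‖v‖)) • gradient (fun x => D (x, v)) r‖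
      ≤ |m⁻¹| * ‖fderiv ℝ D (r, v)‖ * P := by
    rw [norm_smul, mul_right_comm]
    exact mul_le_mul hcoef (norm_gradient_fst_le hD) (norm_nonneg _) (by positivity)
  have hgrad₂ : ‖(1 / m * (inner ℝ p_v v / ‖v‖)) • gradient (fun y => D (r, y)) v‖
      ≤ |m⁻¹| * ‖fderiv ℝ D (r, v)‖ * P := by
    rw [norm_smul, mul_right_comm]
    exact mul_le_mul hcoef (norm_gradient_snd_le hD) (norm_nonneg _) (by positivity)
  have hadj : ‖(ContinuousLinearMap.adjoint (fderiv ℝ g r)) p_v‖ ≤ ‖fderiv ℝ g r‖ * P := by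
    refine ((ContinuousLinearMap.adjoint (fderiv ℝ g r)).le_opNorm p_v).trans ?_
    rw [LinearIsometryEquiv.norm_map]
    exact mul_le_mul_of_nonneg_left hv (norm_nonneg _)
  have hdrag₁ : ‖(D (r, v) / m / ‖v‖) • p_v‖ ≤ |D (r, v) / m| * ‖v‖⁻¹ * P := by
    rw [norm_smul, Real.norm_eq_abs, div_eq_mul_inv _ ‖v‖, abs_mul, abs_inv, abs_norm]
    exact mul_le_mul_of_nonneg_left hv (by positivity)
  have hdrag₂ : ‖(D (r, v) / m * inner ℝ p_v v / ‖v‖ ^ 3) • v‖ ≤ |D (r, v) / m| * ‖v‖⁻¹ * P := by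
    rcases eq_or_ne v 0 with rfl | hv0
    · simp
    have hv' : 0 < ‖v‖ := norm_pos_iff.mpr hv0
    have hscalar : D (r, v) / m * inner ℝ p_v v / ‖v‖ ^ 3 * ‖v‖
        = D (r, v) / m * ‖v‖⁻¹ * (inner ℝ p_v v / ‖v‖) := by
      field_simp
    calc _ = |D (r, v) / m * inner ℝ p_v v / ‖v‖ ^ 3 * ‖v‖| := by
          rw [norm_smul, Real.norm_eq_abs, abs_mul, abs_norm]
      _ = |D (r, v) / m| * ‖v‖⁻¹ * |inner ℝ p_v v / ‖v‖| := by
          rw [hscalar, abs_mul, abs_mul, abs_inv, abs_norm]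
      _ ≤ _ := mul_le_mul_of_nonneg_left hproj (by positivity)
  have h₁ : 0 ≤ |m⁻¹| * ‖fderiv ℝ D (r, v)‖ * P := by positivity
  have h₂ : 0 ≤ ‖fderiv ℝ g r‖ * P := by positivity
  have h₃ : 0 ≤ |D (r, v) / m| * ‖v‖⁻¹ * P := by positivity
  refine norm_prod_le_iff.mpr ⟨(norm_add_le _ _).trans ?_, (norm_sub_le _ _).trans ?_⟩
  · unfold adjointFieldBound
    linarith
  · grw [norm_add_le, norm_add_le, norm_neg, hgrad₂, hdrag₁, hdrag₂, hr]
    unfold adjointFieldBound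
    linarith

theorem continuousOn_adjointFieldBound {α : Type*} [TopologicalSpace α] {s : Set α}
    {D : E × E → ℝ} {g : E → E} {m : α → ℝ} {r v : α → E}
    (hD : ContDiff ℝ 1 D) (hg : ContDiff ℝ 1 g) (hm : ContinuousOn m s) (hr : ContinuousOn r s)
    (hv : ContinuousOn v s) (hm0 : ∀ t ∈ s, m t ≠ 0) (hv0 : ∀ t ∈ s, v t ≠ 0) :
    ContinuousOn (fun t => adjointFieldBound D g (m t) (r t) (v t)) s := by
  have hrv : ContinuousOn (fun t => (r t, v t)) s := hr.prodMk hv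
  have hm' : ContinuousOn (fun t => (m t)⁻¹) s := hm.inv₀ hm0
  have hv' : ContinuousOn (fun t => ‖v t‖⁻¹) s :=
    hv.norm.inv₀ fun t ht => norm_ne_zero_iff.mpr (hv0 t ht)
  unfold adjointFieldBound
  simp only [div_eq_mul_inv]
  exact (((continuousOn_const.add (hm'.abs.mul
    ((hD.continuous_fderiv one_ne_zero).comp_continuousOn hrv).norm)).add
    ((hg.continuous_fderiv one_ne_zero).comp_continuousOn hr).norm).add
    ((continuousOn_const.mul ((hD.continuous.comp_continuousOn hrv).mul hm').abs).mul hv'))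

end Goddard

end

theorem degenerate_extremal_lemma_general
    (t_f C : ℝ)
    (D : E3 × E3 → ℝ) (g : E3 → E3)
    (hD : ContDiff ℝ 1 D) (hg : ContDiff ℝ 1 g)
    (r v : ℝ → E3) (m : ℝ → ℝ)
    (hr : ContinuousOn r (Icc 0 t_f)) (hv : ContinuousOn v (Icc 0 t_f))
    (hm : ContinuousOn m (Icc 0 t_f))
    (hmpos : ∀ t ∈ Icc (0:ℝ) t_f, 0 < m t)
    (hvne : ∀ t ∈ Icc (0:ℝ) t_f, v t ≠ 0)
    (u : ℝ → E3)
    (p_r p_v : ℝ → E3) (p_m : ℝ → ℝ)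
    (hpr : ∀ t ∈ Icc (0:ℝ) t_f, HasDerivAt p_r
      ((1 / m t * ((inner ℝ (p_v t) (v t) : ℝ) / ‖v t‖)) •
          gradient (fun x => D (x, v t)) (r t)
        + (ContinuousLinearMap.adjoint (fderiv ℝ g (r t))) (p_v t)) t)
    (hpv : ∀ t ∈ Icc (0:ℝ) t_f, HasDerivAt p_v
      (-p_r t
        + (1 / m t * ((inner ℝ (p_v t) (v t) : ℝ) / ‖v t‖)) •
            gradient (fun y => D (r t, y)) (v t)
        + (D (r t, v t) / m t / ‖v t‖) • p_v t
        - (D (r t, v t) / m t * (inner ℝ (p_v t) (v t) : ℝ) / ‖v t‖ ^ 3) • v t) t)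
    (hpm : ∀ t ∈ Icc (0:ℝ) t_f, HasDerivAt p_m
      (1 / m t *
        (inner ℝ (p_v t)
          (-(D (r t, v t) / m t / ‖v t‖) • v t + (C / m t) • u t) : ℝ)) t)
    (t₀ : ℝ) (ht₀ : t₀ ∈ Icc (0:ℝ) t_f)
    (hpr0 : p_r t₀ = 0) (hpv0 : p_v t₀ = 0) :
    (∀ t ∈ Icc (0:ℝ) t_f, p_r t = 0 ∧ p_v t = 0) ∧
      (∀ t ∈ Icc (0:ℝ) t_f, ∀ s ∈ Icc (0:ℝ) t_f, p_m t = p_m s) := by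
  obtain ⟨K, hK⟩ := isCompact_Icc.exists_bound_of_continuousOn
    (Goddard.continuousOn_adjointFieldBound hD hg hm hr hv (fun t ht => (hmpos t ht).ne') hvne)
  have hzero : EqOn (fun t => (p_r t, p_v t)) 0 (Icc 0 t_f) :=
    eqOn_zero_Icc_of_norm_deriv_le (K := K)
      (f' := fun t => Goddard.adjointField D g (m t) (r t) (v t) (p_r t) (p_v t))
      (fun t ht => (hpr t ht).prodMk (hpv t ht))
      (fun t ht => (Goddard.norm_adjointField_le g (hD.differentiable one_ne_zero _) _ _).trans
        (mul_le_mul_of_nonneg_right ((le_abs_self _).trans (hK t ht)) (norm_nonneg _)))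
      ht₀ (by simp [hpr0, hpv0])
  have hcostate : ∀ t ∈ Icc (0:ℝ) t_f, p_r t = 0 ∧ p_v t = 0 :=
    fun t ht => Prod.mk_eq_zero.mp (hzero ht)
  have hpm0 : ∀ t ∈ Icc (0:ℝ) t_f, HasDerivAt p_m 0 t := fun t ht => by
    simpa [(hcostate t ht).2] using hpm t ht
  have hconst := constant_of_has_deriv_right_zero
    (fun t ht => (hpm0 t ht).continuousAt.continuousWithinAt)
    (fun t ht => (hpm0 t (Ico_subset_Icc_self ht)).hasDerivWithinAt)
  exact ⟨hcostate, fun t ht s hs => (hconst t ht).trans (hconst s hs).symm⟩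

theorem degenerate_extremal_lemma
    (t_f C b : ℝ) (ht_f : 0 < t_f) (hC : 0 < C) (hb : 0 < b)
    (D : E3 × E3 → ℝ) (g : E3 → E3)
    (hD : ContDiff ℝ 1 D) (hg : ContDiff ℝ 1 g)
    (r v : ℝ → E3) (m : ℝ → ℝ)
    (hr : ContinuousOn r (Icc 0 t_f)) (hv : ContinuousOn v (Icc 0 t_f))
    (hm : ContinuousOn m (Icc 0 t_f))
    (hmpos : ∀ t ∈ Icc (0:ℝ) t_f, 0 < m t)
    (hvne : ∀ t ∈ Icc (0:ℝ) t_f, v t ≠ 0)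
    (u : ℝ → E3)
    (p_r p_v : ℝ → E3) (p_m : ℝ → ℝ)
    (hpr : ∀ t ∈ Icc (0:ℝ) t_f, HasDerivAt p_r
      ((1 / m t * ((inner ℝ (p_v t) (v t) : ℝ) / ‖v t‖)) •
          gradient (fun x => D (x, v t)) (r t)
        + (ContinuousLinearMap.adjoint (fderiv ℝ g (r t))) (p_v t)) t)
    (hpv : ∀ t ∈ Icc (0:ℝ) t_f, HasDerivAt p_v
      (-p_r t
        + (1 / m t * ((inner ℝ (p_v t) (v t) : ℝ) / ‖v t‖)) •
            gradient (fun y => D (r t, y)) (v t)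
        + (D (r t, v t) / m t / ‖v t‖) • p_v t
        - (D (r t, v t) / m t * (inner ℝ (p_v t) (v t) : ℝ) / ‖v t‖ ^ 3) • v t) t)
    (hpm : ∀ t ∈ Icc (0:ℝ) t_f, HasDerivAt p_m
      (1 / m t *
        (inner ℝ (p_v t)
          (-(D (r t, v t) / m t / ‖v t‖) • v t + (C / m t) • u t) : ℝ)) t)
    (t₀ : ℝ) (ht₀ : t₀ ∈ Icc (0:ℝ) t_f)
    (hpr0 : p_r t₀ = 0) (hpv0 : p_v t₀ = 0) :
    (∀ t ∈ Icc (0:ℝ) t_f, p_r t = 0 ∧ p_v t = 0) ∧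
      (∀ t ∈ Icc (0:ℝ) t_f, ∀ s ∈ Icc (0:ℝ) t_f, p_m t = p_m s) :=
  degenerate_extremal_lemma_general t_f C D g hD hg r v m hr hv hm hmpos hvne u p_r p_v p_m hpr hpv
    hpm t₀ ht₀ hpr0 hpv0
end

section
/- Let E = EuclideanSpace ℝ (Fin 3). Let C > 0, m > 0, b > 0, p_m ∈ ℝ be real numbers and let p_v ∈ E with p_v ≠ 0. Define Φ(w) = (C/m)·⟪p_v, w⟫ − b·p_m·‖w‖ for w ∈ E. If u ∈ E satisfies ‖u‖ ≤ 1 and Φ(u) ≥ Φ(w) for every w ∈ E with ‖w‖ ≤ 1, then there exists α ∈ [0,1] such that u = α • (‖p_v‖⁻¹ • p_v). -/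
/-! Turning a maximizer `u` towards `p_v` while keeping its norm can only increase `⟪p_v, u⟫`,
so maximality forces equality in Cauchy–Schwarz, i.e. `u` is a nonnegative multiple of `p_v`. -/

local notation "E3" => EuclideanSpace ℝ (Fin 3)

open Metric RealInnerProductSpace

variable {F : Type*} [NormedAddCommGroup F] [InnerProductSpace ℝ F]

lemma norm_smul_inv_norm_smul {p : F} (hp : p ≠ 0) (t : ℝ) :
    ‖t • (‖p‖⁻¹ • p)‖ = |t| := by
  rw [norm_smul, norm_smul, norm_inv, norm_norm, inv_mul_cancel₀ (norm_ne_zero_iff.mpr hp),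
    mul_one, Real.norm_eq_abs]

lemma inner_smul_inv_norm_smul {p : F} (hp : p ≠ 0) (t : ℝ) :
    ⟪p, t • (‖p‖⁻¹ • p)⟫ = t * ‖p‖ := by
  have : ‖p‖ ≠ 0 := norm_ne_zero_iff.mpr hp
  rw [real_inner_smul_right, real_inner_smul_right, real_inner_self_eq_norm_sq]
  field_simp

lemma norm_mul_norm_le_inner_of_isMaxOn {p u : F} (hp : p ≠ 0) {c r : ℝ} (hc : 0 < c)
    {g : ℝ → ℝ} (hu : u ∈ closedBall 0 r)
    (hmax : IsMaxOn (fun w => c * ⟪p, w⟫ - g ‖w‖) (closedBall 0 r) u) :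
    ‖p‖ * ‖u‖ ≤ ⟪p, u⟫ := by
  set w := ‖u‖ • (‖p‖⁻¹ • p)
  have hnorm : ‖w‖ = ‖u‖ := by rw [norm_smul_inv_norm_smul hp, abs_norm]
  have hw : w ∈ closedBall 0 r := by
    rwa [mem_closedBall_zero_iff, hnorm, ← mem_closedBall_zero_iff]
  have hle : c * ⟪p, w⟫ - g ‖w‖ ≤ c * ⟪p, u⟫ - g ‖u‖ := hmax hw
  rw [hnorm, inner_smul_inv_norm_smul hp, mul_comm ‖u‖] at hle
  exact le_of_mul_le_mul_left (by linarith) hc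

lemma eq_norm_smul_inv_norm_smul_of_norm_mul_norm_le_inner {p u : F} (hp : p ≠ 0)
    (h : ‖p‖ * ‖u‖ ≤ ⟪p, u⟫) : u = ‖u‖ • (‖p‖⁻¹ • p) := by
  have hcs : ‖u‖ • p = ‖p‖ • u :=
    inner_eq_norm_mul_iff_real.mp (le_antisymm (real_inner_le_norm p u) h)
  rw [smul_comm, hcs, smul_smul, inv_mul_cancel₀ (norm_ne_zero_iff.mpr hp), one_smul]

theorem maximizer_collinear_pv_general
    (C m b p_m : ℝ) (hC : 0 < C) (hm : 0 < m)
    (p_v : E3) (hpv : p_v ≠ 0)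
    (u : E3) (hu : ‖u‖ ≤ 1)
    (hmax : ∀ w : E3, ‖w‖ ≤ 1 →
      C / m * (inner ℝ p_v w : ℝ) - b * p_m * ‖w‖ ≤
        C / m * (inner ℝ p_v u : ℝ) - b * p_m * ‖u‖) :
    ∃ α ∈ Set.Icc (0:ℝ) 1, u = α • (‖p_v‖⁻¹ • p_v) := by
  have hball : u ∈ closedBall 0 1 := mem_closedBall_zero_iff.mpr hu
  have hcs : ‖p_v‖ * ‖u‖ ≤ ⟪p_v, u⟫ :=
    norm_mul_norm_le_inner_of_isMaxOn hpv (div_pos hC hm) (g := fun t => b * p_m * t) hball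
      fun w hw => hmax w (mem_closedBall_zero_iff.mp hw)
  exact ⟨‖u‖, ⟨norm_nonneg u, hu⟩,
    eq_norm_smul_inv_norm_smul_of_norm_mul_norm_le_inner hpv hcs⟩

theorem maximizer_collinear_pv
    (C m b p_m : ℝ) (hC : 0 < C) (hm : 0 < m) (hb : 0 < b)
    (p_v : E3) (hpv : p_v ≠ 0)
    (u : E3) (hu : ‖u‖ ≤ 1)
    (hmax : ∀ w : E3, ‖w‖ ≤ 1 →
      C / m * (inner ℝ p_v w : ℝ) - b * p_m * ‖w‖ ≤
        C / m * (inner ℝ p_v u : ℝ) - b * p_m * ‖u‖) :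
    ∃ α ∈ Set.Icc (0:ℝ) 1, u = α • (‖p_v‖⁻¹ • p_v) :=
  maximizer_collinear_pv_general C m b p_m hC hm p_v hpv u hu hmax
end

section
/- Let E = EuclideanSpace ℝ (Fin 3). Let C > 0, m > 0, b > 0, p_m ∈ ℝ be real numbers and let p_v ∈ E with p_v ≠ 0. Define Φ(w) = (C/m)·⟪p_v, w⟫ − b·p_m·‖w‖ and the switching value Ψ = (C/m)·‖p_v‖ − b·p_m. If Ψ < 0 and u ∈ E satisfies ‖u‖ ≤ 1 and Φ(u) ≥ Φ(w) for every w ∈ E with ‖w‖ ≤ 1, then u = 0. -/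
/-! Testing the maximality of `u` against `w = 0` gives `0 ≤ Φ(u)`, while Cauchy–Schwarz gives
`Φ(u) ≤ Ψ ‖u‖`; since `Ψ < 0`, this forces `‖u‖ = 0`. -/

local notation "E3" => EuclideanSpace ℝ (Fin 3)

section

variable {F : Type*} [NormedAddCommGroup F] [InnerProductSpace ℝ F]

theorem mul_inner_sub_mul_norm_le {a : ℝ} (ha : 0 ≤ a) (c : ℝ) (p u : F) :
    a * inner ℝ p u - c * ‖u‖ ≤ (a * ‖p‖ - c) * ‖u‖ := by
  have hcs : a * inner ℝ p u ≤ a * (‖p‖ * ‖u‖) :=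
    mul_le_mul_of_nonneg_left (real_inner_le_norm p u) ha
  linarith

theorem eq_zero_of_nonneg_mul_inner_sub_mul_norm {a c : ℝ} {p u : F} (ha : 0 ≤ a)
    (hΨ : a * ‖p‖ - c < 0) (hu : 0 ≤ a * inner ℝ p u - c * ‖u‖) : u = 0 := by
  have hle : 0 ≤ (a * ‖p‖ - c) * ‖u‖ := hu.trans (mul_inner_sub_mul_norm_le ha c p u)
  have hnorm : ‖u‖ ≤ 0 := nonpos_of_mul_nonneg_right hle hΨ
  exact norm_le_zero_iff.mp hnorm

end

theorem maximizer_zero_of_switching_neg_general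
    (C m b p_m : ℝ) (hC : 0 < C) (hm : 0 < m)
    (p_v : E3)
    (hΨ : C / m * ‖p_v‖ - b * p_m < 0)
    (u : E3)
    (hmax : ∀ w : E3, ‖w‖ ≤ 1 →
      C / m * (inner ℝ p_v w : ℝ) - b * p_m * ‖w‖ ≤
        C / m * (inner ℝ p_v u : ℝ) - b * p_m * ‖u‖) :
    u = 0 := by
  have hΦ0 := hmax 0 (by simp)
  simp only [inner_zero_right, norm_zero, mul_zero, sub_zero] at hΦ0
  exact eq_zero_of_nonneg_mul_inner_sub_mul_norm (div_pos hC hm).le hΨ hΦ0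

theorem maximizer_zero_of_switching_neg
    (C m b p_m : ℝ) (hC : 0 < C) (hm : 0 < m) (hb : 0 < b)
    (p_v : E3) (hpv : p_v ≠ 0)
    (hΨ : C / m * ‖p_v‖ - b * p_m < 0)
    (u : E3) (hu : ‖u‖ ≤ 1)
    (hmax : ∀ w : E3, ‖w‖ ≤ 1 →
      C / m * (inner ℝ p_v w : ℝ) - b * p_m * ‖w‖ ≤
        C / m * (inner ℝ p_v u : ℝ) - b * p_m * ‖u‖) :
    u = 0 :=
  maximizer_zero_of_switching_neg_general C m b p_m hC hm p_v hΨ u hmax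
end

section
/- Let E = EuclideanSpace ℝ (Fin 3). Let C > 0, m > 0, b > 0, p_m ∈ ℝ be real numbers and let p_v ∈ E with p_v ≠ 0. Define Φ(w) = (C/m)·⟪p_v, w⟫ − b·p_m·‖w‖ and the switching value Ψ = (C/m)·‖p_v‖ − b·p_m. If Ψ > 0 and u ∈ E satisfies ‖u‖ ≤ 1 and Φ(u) ≥ Φ(w) for every w ∈ E with ‖w‖ ≤ 1, then u = ‖p_v‖⁻¹ • p_v (in particular ‖u‖ = 1). -/
/-!
Write `Φ w = c ⟪p, w⟫ - β ‖w‖` and `Ψ = c ‖p‖ - β`. By Cauchy–Schwarz `Φ w ≤ Ψ ‖w‖`, with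
equality at the unit vector `w₀ = ‖p‖⁻¹ • p`, where `Φ w₀ = Ψ`. A maximizer `u` therefore satisfies
`Ψ ≤ Φ u ≤ Ψ ‖u‖ ≤ Ψ`; since `Ψ > 0` this forces `‖u‖ = 1` and equality in Cauchy–Schwarz,
i.e. `u = w₀`.
-/

open scoped RealInnerProductSpace

local notation "E3" => EuclideanSpace ℝ (Fin 3)

section UnitBallMaximizer

variable {F : Type*} [NormedAddCommGroup F] [InnerProductSpace ℝ F]

theorem norm_inv_norm_smul_self {p : F} (hp : p ≠ 0) : ‖‖p‖⁻¹ • p‖ = 1 := by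
  simpa using norm_smul_inv_norm (𝕜 := ℝ) hp

theorem mul_inner_sub_mul_norm_le_s5 {c : ℝ} (hc : 0 ≤ c) (β : ℝ) (p w : F) :
    c * ⟪p, w⟫ - β * ‖w‖ ≤ (c * ‖p‖ - β) * ‖w‖ := by
  have hcs := mul_le_mul_of_nonneg_left (real_inner_le_norm p w) hc
  linarith

theorem mul_inner_inv_norm_smul_sub (c β : ℝ) {p : F} (hp : p ≠ 0) :
    c * ⟪p, ‖p‖⁻¹ • p⟫ - β * ‖‖p‖⁻¹ • p‖ = c * ‖p‖ - β := by
  have hpn : ‖p‖ ≠ 0 := norm_ne_zero_iff.mpr hp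
  rw [norm_inv_norm_smul_self hp, real_inner_smul_right, real_inner_self_eq_norm_sq]
  field_simp

theorem eq_inv_norm_smul_of_inner_eq_norm {p u : F} (hp : p ≠ 0) (hu : ‖u‖ = 1)
    (h : ⟪p, u⟫ = ‖p‖) : u = ‖p‖⁻¹ • p := by
  have h' : ⟪p, u⟫ = ‖p‖ * ‖u‖ := by rw [h, hu, mul_one]
  rw [← (inner_eq_norm_mul_iff_div (𝕜 := ℝ) hp).mp h']
  simp [hu]

theorem eq_inv_norm_smul_of_forall_le {c β : ℝ} (hc : 0 < c) {p u : F} (hp : p ≠ 0)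
    (hΨ : 0 < c * ‖p‖ - β) (hu : ‖u‖ ≤ 1)
    (hmax : ∀ w : F, ‖w‖ ≤ 1 → c * ⟪p, w⟫ - β * ‖w‖ ≤ c * ⟪p, u⟫ - β * ‖u‖) :
    u = ‖p‖⁻¹ • p ∧ ‖u‖ = 1 := by
  have hΨ_le : c * ‖p‖ - β ≤ c * ⟪p, u⟫ - β * ‖u‖ := by
    simpa only [mul_inner_inv_norm_smul_sub c β hp] using
      hmax (‖p‖⁻¹ • p) (norm_inv_norm_smul_self hp).le
  have hle_Ψ := mul_inner_sub_mul_norm_le_s5 hc.le β p u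
  have hnorm : ‖u‖ = 1 :=
    le_antisymm hu (le_of_mul_le_mul_left (by linarith) hΨ)
  have hinner : ⟪p, u⟫ = ‖p‖ := by
    have hcs := real_inner_le_norm p u
    rw [hnorm, mul_one] at hcs hΨ_le
    exact le_antisymm hcs (le_of_mul_le_mul_left (by linarith) hc)
  exact ⟨eq_inv_norm_smul_of_inner_eq_norm hp hnorm hinner, hnorm⟩

end UnitBallMaximizer

theorem maximizer_full_thrust_of_switching_pos_general
    (C m b p_m : ℝ) (hC : 0 < C) (hm : 0 < m)
    (p_v : E3) (hpv : p_v ≠ 0)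
    (hΨ : 0 < C / m * ‖p_v‖ - b * p_m)
    (u : E3) (hu : ‖u‖ ≤ 1)
    (hmax : ∀ w : E3, ‖w‖ ≤ 1 →
      C / m * (inner ℝ p_v w : ℝ) - b * p_m * ‖w‖ ≤
        C / m * (inner ℝ p_v u : ℝ) - b * p_m * ‖u‖) :
    u = ‖p_v‖⁻¹ • p_v ∧ ‖u‖ = 1 :=
  eq_inv_norm_smul_of_forall_le (div_pos hC hm) hpv hΨ hu hmax

theorem maximizer_full_thrust_of_switching_pos
    (C m b p_m : ℝ) (hC : 0 < C) (hm : 0 < m) (hb : 0 < b)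
    (p_v : E3) (hpv : p_v ≠ 0)
    (hΨ : 0 < C / m * ‖p_v‖ - b * p_m)
    (u : E3) (hu : ‖u‖ ≤ 1)
    (hmax : ∀ w : E3, ‖w‖ ≤ 1 →
      C / m * (inner ℝ p_v w : ℝ) - b * p_m * ‖w‖ ≤
        C / m * (inner ℝ p_v u : ℝ) - b * p_m * ‖u‖) :
    u = ‖p_v‖⁻¹ • p_v ∧ ‖u‖ = 1 :=
  maximizer_full_thrust_of_switching_pos_general C m b p_m hC hm p_v hpv hΨ u hu hmax
end
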